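/- arXiv:2602.04211 — 3 statements merged into one kernel-verified Lean document; each statement's English description precedes it below -/
import Mathlib

section
/- Let E be a field containing F_q, let N ≥ 1, and let u ∈ (E^sep)^N be a column vector whose entries are F_q-linearly independent and such that u^(N) lies in the E-span of u, u^(1), ..., u^(N-1). Let M(u) = [u, u^(1), ..., u^(N-1)] be the N×N Moore matrix. Then M(u)^{-1} M(u)^(1) equals the companion-type matrix Φ with subdiagonal 1's and last column (f_0,...,f_{N-1})^T = M(u)^{-1} u^(N); in particular Φ is invertible and f_0 = (-1)^{N-1} (det M(u))^{q-1} ≠ 0. -/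
open Matrix Polynomial

/-!
A kernel vector `c` of the Moore matrix `M` of an `𝔽_q`-linearly independent family `u` would give
the nonzero `q`-polynomial `∑ c_j X^{q^j}` of degree `< q^N`; being `𝔽_q`-linear, it vanishes on all
`q^N` elements of the `𝔽_q`-span of `u`, which is absurd. So `M` is invertible. The Frobenius twist
shifts the columns of `M` by one, whence `M^(1) = M Φ` for the companion matrix `Φ` of
`f = M⁻¹ u^(N)`, and comparing determinants, `(-1)^{N-1} f_0 = det Φ = (det M)^{q-1}`.
-/

section Moore

variable {R : Type*} [CommRing R]

def mooreMatrix (q : ℕ) {n : ℕ} (u : Fin n → R) : Matrix (Fin n) (Fin n) R :=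
  of fun i j => u i ^ q ^ (j : ℕ)

def companionMatrix {N : ℕ} (f : Fin N → R) : Matrix (Fin N) (Fin N) R :=
  of fun i j => if (j : ℕ) = N - 1 then f i else if (i : ℕ) = (j : ℕ) + 1 then 1 else 0

theorem det_companionMatrix {N : ℕ} (hN : 0 < N) (f : Fin N → R) :
    (companionMatrix f).det = (-1) ^ (N - 1) * f ⟨0, hN⟩ := by
  obtain ⟨n, rfl⟩ := Nat.exists_eq_add_one_of_ne_zero hN.ne'
  have hminor : (companionMatrix f).submatrix Fin.succ (Fin.last n).succAbove = 1 := by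
    ext a b
    simp only [companionMatrix, submatrix_apply, Fin.succAbove_last, of_apply, Fin.val_castSucc,
      Fin.val_succ, add_tsub_cancel_right, b.isLt.ne, if_false, one_apply, Fin.ext_iff,
      add_left_inj]
  rw [det_succ_row_zero, Finset.sum_eq_single (Fin.last n), hminor]
  · simp [companionMatrix]
  · intro j _ hj
    have hjn : (j : ℕ) ≠ n := fun h => hj (Fin.ext h)
    simp [companionMatrix, hjn]
  · simp

theorem mooreMatrix_map_pow_eq_mul_companionMatrix (q : ℕ) {N : ℕ} (u : Fin N → R)
    (f : Fin N → R) (hf : mooreMatrix q u *ᵥ f = fun i => u i ^ q ^ N) :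
    (mooreMatrix q u).map (· ^ q) = mooreMatrix q u * companionMatrix f := by
  ext i j
  have hpow : (mooreMatrix q u i j) ^ q = u i ^ q ^ ((j : ℕ) + 1) := by
    rw [mooreMatrix, of_apply, ← pow_mul, pow_succ]
  rw [map_apply, hpow, mul_apply]
  by_cases hj : (j : ℕ) = N - 1
  · have hjN : (j : ℕ) + 1 = N := by omega
    rw [hjN, ← congrFun hf i]
    simp only [companionMatrix, of_apply, if_pos hj, mulVec, dotProduct]
  · have hlt : (j : ℕ) + 1 < N := by omega
    rw [Finset.sum_eq_single ⟨(j : ℕ) + 1, hlt⟩]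
    · simp [companionMatrix, mooreMatrix, hj]
    · intro k _ hk
      have hk' : (k : ℕ) ≠ (j : ℕ) + 1 := fun h => hk (Fin.ext h)
      simp [companionMatrix, hj, hk']
    · simp

end Moore

section FiniteField

variable {K L : Type*} [Field K] [Fintype K] [Field L] [Algebra K L]

local notation "q" => Fintype.card K

theorem sum_smul_pow_card_pow {ι : Type*} (s : Finset ι) (d : ι → K) (u : ι → L) (m : ℕ) :
    (∑ k ∈ s, d k • u k) ^ q ^ m = ∑ k ∈ s, d k • u k ^ q ^ m := by
  induction m with
  | zero => simp
  | succ m ih =>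
    simp_rw [pow_succ, pow_mul, ih]
    exact (map_sum (FiniteField.frobeniusAlgHom K L) (fun k => d k • u k ^ q ^ m) s).trans
      (by simp only [map_smul]; rfl)

theorem det_map_pow_card {n : Type*} [Fintype n] [DecidableEq n] (M : Matrix n n L) :
    (M.map (· ^ q)).det = M.det ^ q :=
  ((FiniteField.frobeniusAlgHom K L).toRingHom.map_det M).symm

theorem mooreMatrix_det_ne_zero {n : ℕ} {u : Fin n → L} (hu : LinearIndependent K u) :
    (mooreMatrix q u).det ≠ 0 := by
  intro hdet
  obtain ⟨c, hc0, hc⟩ := exists_mulVec_eq_zero_iff.mpr hdet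
  set P : L[X] := ∑ j, C (c j) * X ^ q ^ (j : ℕ)
  have hq : 1 < q := Fintype.one_lt_card
  have hcoeff : ∀ j : Fin n, P.coeff (q ^ (j : ℕ)) = c j := by
    intro j
    simp only [P, finsetSum_coeff, coeff_C_mul_X_pow]
    rw [Finset.sum_eq_single j]
    · simp
    · intro k _ hk
      rw [if_neg fun h => hk (Fin.ext (Nat.pow_right_injective hq h).symm)]
    · simp
  have hP : P ≠ 0 := by
    obtain ⟨j, hj⟩ := Function.ne_iff.mp hc0
    exact fun h => hj (by rw [← hcoeff, h, coeff_zero, Pi.zero_apply])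
  have hdeg : P.natDegree < Fintype.card (Fin n → K) := by
    have hle : P.natDegree ≤ q ^ n - 1 := by
      refine natDegree_sum_le_of_forall_le _ _ fun j _ => (natDegree_C_mul_X_pow_le _ _).trans ?_
      have := Nat.pow_lt_pow_right hq j.isLt
      omega
    have := pow_pos (by omega : 0 < q) n
    rw [Fintype.card_fun, Fintype.card_fin]
    omega
  have hroot : ∀ d, P.eval (Fintype.linearCombination K u d) = 0 := by
    intro d
    calc P.eval (Fintype.linearCombination K u d)
        = ∑ j, c j * ∑ k, d k • u k ^ q ^ (j : ℕ) := by
          simp [P, eval_finsetSum, Fintype.linearCombination_apply, sum_smul_pow_card_pow]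
      _ = ∑ k, d k • (mooreMatrix q u *ᵥ c) k := by
          simp only [mulVec, dotProduct, mooreMatrix, of_apply, Finset.mul_sum, Finset.smul_sum]
          rw [Finset.sum_comm]
          simp only [mul_comm, mul_smul_comm]
      _ = 0 := by simp [hc]
  exact hP (eq_zero_of_natDegree_lt_card_of_eval_eq_zero P
    hu.fintypeLinearCombination_injective hroot hdeg)

end FiniteField

theorem stmt_5_general (Fq Esep : Type*) [Field Fq] [Fintype Fq] [Field Esep]
    [Algebra Fq Esep]
    (N : ℕ) (hN : 0 < N) (u : Fin N → Esep)
    (hLI : LinearIndependent Fq u) :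
    let q := Fintype.card Fq
    let M : Matrix (Fin N) (Fin N) Esep := Matrix.of fun i j => u i ^ q ^ (j : ℕ)
    let f : Fin N → Esep := M⁻¹ *ᵥ fun i => u i ^ q ^ N
    let Φ : Matrix (Fin N) (Fin N) Esep := Matrix.of fun i j =>
      if (j : ℕ) = N - 1 then f i else if (i : ℕ) = (j : ℕ) + 1 then 1 else 0
    M⁻¹ * (Matrix.of fun i j => M i j ^ q) = Φ ∧ IsUnit Φ ∧
      f ⟨0, hN⟩ = (-1) ^ (N - 1) * M.det ^ (q - 1) ∧ f ⟨0, hN⟩ ≠ 0 := by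
  intro q M f Φ
  have hdet : M.det ≠ 0 := mooreMatrix_det_ne_zero hLI
  have hf : M *ᵥ f = fun i => u i ^ q ^ N := by
    rw [mulVec_mulVec, mul_nonsing_inv M hdet.isUnit, one_mulVec]
  have hMΦ : M.map (· ^ q) = M * Φ := mooreMatrix_map_pow_eq_mul_companionMatrix q u f hf
  have hdetΦ : Φ.det = M.det ^ (q - 1) := by
    refine mul_left_cancel₀ hdet ?_
    rw [← det_mul, ← hMΦ, det_map_pow_card, ← pow_succ', Nat.sub_add_cancel Fintype.card_pos]
  have hf0 : f ⟨0, hN⟩ = (-1) ^ (N - 1) * M.det ^ (q - 1) := by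
    rw [← hdetΦ, show Φ.det = _ from det_companionMatrix hN f, ← mul_assoc, ← mul_pow, neg_one_mul, neg_neg, one_pow,
      one_mul]
  refine ⟨?_, ?_, hf0, ?_⟩
  · change M⁻¹ * M.map (· ^ q) = Φ
    rw [hMΦ, ← Matrix.mul_assoc, nonsing_inv_mul M hdet.isUnit, Matrix.one_mul]
  · rw [isUnit_iff_isUnit_det, hdetΦ]
    exact (pow_ne_zero _ hdet).isUnit
  · rw [hf0]
    exact mul_ne_zero (pow_ne_zero _ (neg_ne_zero.mpr one_ne_zero)) (pow_ne_zero _ hdet)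

/-- For a fundamental solution `u` (entries `F_q`-linearly independent, with `u^(N)`
in the `E`-span of `u, u^(1), …, u^(N-1)`), the matrix `M(u)⁻¹ M(u)^(1)` is the
companion-type matrix `Φ` with subdiagonal `1`'s and last column
`(f_0,…,f_{N-1})ᵀ = M(u)⁻¹ u^(N)`; in particular `Φ` is invertible and
`f_0 = (-1)^{N-1} (det M(u))^{q-1} ≠ 0`. -/
theorem stmt_5 (Fq E Esep : Type*) [Field Fq] [Fintype Fq] [Field E] [Field Esep]
    [Algebra Fq E] [Algebra E Esep] [Algebra Fq Esep] [IsScalarTower Fq E Esep]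
    (N : ℕ) (hN : 0 < N) (u : Fin N → Esep)
    (hLI : LinearIndependent Fq u)
    (hspan : (fun i => u i ^ Fintype.card Fq ^ N) ∈
      Submodule.span E (Set.range fun j : Fin N => fun i => u i ^ Fintype.card Fq ^ (j : ℕ))) :
    let q := Fintype.card Fq
    let M : Matrix (Fin N) (Fin N) Esep := Matrix.of fun i j => u i ^ q ^ (j : ℕ)
    let f : Fin N → Esep := M⁻¹ *ᵥ fun i => u i ^ q ^ N
    let Φ : Matrix (Fin N) (Fin N) Esep := Matrix.of fun i j =>
      if (j : ℕ) = N - 1 then f i else if (i : ℕ) = (j : ℕ) + 1 then 1 else 0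
    M⁻¹ * (Matrix.of fun i j => M i j ^ q) = Φ ∧ IsUnit Φ ∧
      f ⟨0, hN⟩ = (-1) ^ (N - 1) * M.det ^ (q - 1) ∧ f ⟨0, hN⟩ ≠ 0 :=
  stmt_5_general Fq Esep N hN u hLI
end

section
/- Suppose d = 1 (i.e., ρ : G → GL_n(F_q)) and ρ is irreducible as an F_q-representation of the finite group G through which it factors. Then every nonzero element u of Sol_E(ρ) = {x ∈ Mat_{n×1}(L) : g(x) = ρ(g)^{-1} x for all g ∈ G} is a fundamental solution, i.e., its n entries are linearly independent over F_q. -/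
/-!
Applying `g⁻¹` to an `F_q`-linear relation `∑ cᵢ uᵢ = 0` among the entries of `u` yields the
relation `ρ(g)ᵀ c`, so the relations form a subspace invariant under the dual representation.
The dual of an irreducible representation is irreducible, since the dot-product orthogonal of a
`ρᵀ`-invariant subspace is `ρ`-invariant. Hence the relations are either trivial or all of
`F_q^n`, and the latter forces `u = 0`.
-/

open Matrix LinearMap.BilinForm

namespace Matrix

variable {ι K : Type*} [Fintype ι] [Field K]

lemma dotProductBilin_isRefl : IsRefl (dotProductBilin K K : LinearMap.BilinForm K (ι → K)) :=
  fun v w h => by simpa [dotProduct_comm] using h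

lemma dotProductBilin_nondegenerate :
    (dotProductBilin K K : LinearMap.BilinForm K (ι → K)).Nondegenerate :=
  ⟨fun _ hv => dotProduct_eq_zero _ hv,
    fun _ hv => dotProduct_eq_zero _ fun w => by simpa [dotProduct_comm] using hv w⟩

lemma mulVec_mem_orthogonal_dotProductBilin {A : Matrix ι ι K} {W : Submodule K (ι → K)}
    (hW : ∀ w ∈ W, Aᵀ *ᵥ w ∈ W) {v : ι → K} (hv : v ∈ orthogonal (dotProductBilin K K) W) :
    A *ᵥ v ∈ orthogonal (dotProductBilin K K) W := fun w hw => by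
  have := hv _ (hW w hw)
  simp only [dotProductBilin_apply_apply] at this ⊢
  rwa [dotProduct_mulVec, ← mulVec_transpose]

def IsIrreducibleFamily {G : Type*} (A : G → Matrix ι ι K) : Prop :=
  ∀ W : Submodule K (ι → K), (∀ g, ∀ w ∈ W, A g *ᵥ w ∈ W) → W = ⊥ ∨ W = ⊤

theorem IsIrreducibleFamily.transpose {G : Type*} {A : G → Matrix ι ι K}
    (hA : IsIrreducibleFamily A) : IsIrreducibleFamily fun g => (A g)ᵀ := by
  intro W hW
  have hWW := orthogonal_orthogonal dotProductBilin_nondegenerate dotProductBilin_isRefl W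
  rcases hA _ fun g _ hv => mulVec_mem_orthogonal_dotProductBilin (hW g) hv with h | h
  · rw [h, orthogonal_bot] at hWW
    exact .inr hWW.symm
  · rw [h, orthogonal_top_eq_bot dotProductBilin_nondegenerate] at hWW
    exact .inl hWW.symm

end Matrix

section LinearCombination

variable {ι κ K L : Type*} [Fintype ι] [Fintype κ] [CommRing K] [CommRing L] [Algebra K L]

lemma Fintype.linearCombination_map_mulVec (M : Matrix ι κ K) (u : κ → L) (c : ι → K) :
    Fintype.linearCombination K (M.map (algebraMap K L) *ᵥ u) c =
      Fintype.linearCombination K u (Mᵀ *ᵥ c) := by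
  simp only [Fintype.linearCombination_apply, mulVec, dotProduct, map_apply, transpose_apply,
    Algebra.smul_def, map_sum, map_mul, Finset.mul_sum, Finset.sum_mul]
  rw [Finset.sum_comm]
  refine Finset.sum_congr rfl fun _ _ => Finset.sum_congr rfl fun _ _ => ?_
  ring

lemma transpose_mulVec_mem_ker_linearCombination (f : L →ₗ[K] L) (M : Matrix ι ι K)
    {u : ι → L} (hu : (fun i => f (u i)) = M.map (algebraMap K L) *ᵥ u) {c : ι → K}
    (hc : c ∈ LinearMap.ker (Fintype.linearCombination K u)) :
    Mᵀ *ᵥ c ∈ LinearMap.ker (Fintype.linearCombination K u) := by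
  rw [LinearMap.mem_ker] at hc ⊢
  rw [← Fintype.linearCombination_map_mulVec, ← hu]
  simpa [Fintype.linearCombination_apply, map_sum] using congrArg f hc

end LinearCombination

theorem stmt_9_general (Fq E L : Type*) [Field Fq] [Field E] [Field L]
    [Algebra Fq E] [Algebra E L] [Algebra Fq L] [IsScalarTower Fq E L]
    (n : ℕ) (ρ : (L ≃ₐ[E] L) →* Matrix.GeneralLinearGroup (Fin n) Fq)
    (hirr : ∀ W : Submodule Fq (Fin n → Fq),
      (∀ (g : L ≃ₐ[E] L), ∀ w ∈ W, (ρ g : Matrix (Fin n) (Fin n) Fq) *ᵥ w ∈ W) →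
      W = ⊥ ∨ W = ⊤)
    (u : Fin n → L) (hu : u ≠ 0)
    (hsol : ∀ g : L ≃ₐ[E] L,
      (fun i => g (u i)) =
        (((ρ g)⁻¹ : Matrix (Fin n) (Fin n) Fq).map (algebraMap Fq L)) *ᵥ u) :
    LinearIndependent Fq u := by
  have hsol_inv (g : L ≃ₐ[E] L) :
      (fun i => (g⁻¹).toLinearMap.restrictScalars Fq (u i)) =
        (ρ g : Matrix (Fin n) (Fin n) Fq).map (algebraMap Fq L) *ᵥ u := by
    simpa [← Matrix.coe_units_inv] using hsol g⁻¹
  rcases Matrix.IsIrreducibleFamily.transpose hirr _ fun g _ hc =>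
      transpose_mulVec_mem_ker_linearCombination _ _ (hsol_inv g) hc with hker | hker
  · exact linearIndependent_iff_injective_fintypeLinearCombination.mpr
      (LinearMap.ker_eq_bot.mp hker)
  · refine absurd (funext fun i => ?_) hu
    classical
    simpa using LinearMap.congr_fun (LinearMap.ker_eq_top.mp hker) (Pi.single i 1)

/-- For `d = 1` and `ρ : Gal(L/E) → GL_n(F_q)` irreducible, every nonzero element
`u` of `Sol_E(ρ) = {x ∈ L^n : g(x) = ρ(g)⁻¹ x for all g}` has `F_q`-linearly
independent entries, i.e. is a fundamental solution. -/
theorem stmt_9 (Fq E L : Type*) [Field Fq] [Fintype Fq] [Field E] [Field L]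
    [Algebra Fq E] [Algebra E L] [Algebra Fq L] [IsScalarTower Fq E L]
    [FiniteDimensional E L] [IsGalois E L]
    (n : ℕ) (ρ : (L ≃ₐ[E] L) →* Matrix.GeneralLinearGroup (Fin n) Fq)
    (hirr : ∀ W : Submodule Fq (Fin n → Fq),
      (∀ (g : L ≃ₐ[E] L), ∀ w ∈ W, (ρ g : Matrix (Fin n) (Fin n) Fq) *ᵥ w ∈ W) →
      W = ⊥ ∨ W = ⊤)
    (u : Fin n → L) (hu : u ≠ 0)
    (hsol : ∀ g : L ≃ₐ[E] L,
      (fun i => g (u i)) =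
        (((ρ g)⁻¹ : Matrix (Fin n) (Fin n) Fq).map (algebraMap Fq L)) *ᵥ u) :
    LinearIndependent Fq u :=
  stmt_9_general Fq E L n ρ hirr u hu hsol
end

section
/- Let A = F_q[θ], K_∞ = F_q((1/θ)), n | q-1, f ∈ A n-th power free of degree d, and E_t = θ + f^{(q-1)/n}τ. The logarithm series log_E = Σ_{k≥0} ℓ_k τ^k has coefficients ℓ_k = (-1)^k f^{(q^k-1)/n} / L_k, where L_0 = 1 and L_k = (θ^{q^k}-θ)(θ^{q^{k-1}}-θ)···(θ^q-θ). Its radius of convergence in K_∞ (with |θ|_∞ = q) is q^{1 + 1/(q-1) - d/n}. -/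
/-!
Solving the recursion gives the closed form of `ℓ_k`, from which
`deg ℓ_k = d (q^k - 1)/n - (q + q^2 + ⋯ + q^k) = (q^k - 1) (d/n - q/(q-1))`.
Hence `|ℓ_k|_∞^{1/q^k} = q^{(1 - q^{-k}) (d/n - q/(q-1))} → q^{d/n - q/(q-1)}`, the inverse of
`q^{1 + 1/(q-1) - d/n}`.
-/

open Filter Topology

theorem Nat.pow_succ_sub_one_div {q n : ℕ} (hn : n ∣ q - 1) (k : ℕ) :
    (q ^ (k + 1) - 1) / n = (q ^ k - 1) / n + (q - 1) / n * q ^ k := by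
  have hsplit : q ^ (k + 1) - 1 = (q ^ k - 1) + (q - 1) * q ^ k := by
    rcases Nat.eq_zero_or_pos q with rfl | hq
    · cases k <;> simp
    · have h1 : 1 ≤ q ^ k := Nat.one_le_pow _ _ hq
      have h2 : (q - 1) * q ^ k = q ^ (k + 1) - q ^ k := by
        rw [Nat.sub_mul, one_mul, pow_succ, mul_comm]
      have h3 : q ^ k ≤ q ^ (k + 1) := Nat.pow_le_pow_right hq (by omega)
      omega
  have hdvd : n ∣ q ^ k - 1 := hn.trans (by simpa using Nat.sub_dvd_pow_sub_pow q 1 k)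
  rw [hsplit, Nat.add_div_of_dvd_right hdvd, Nat.div_mul_right_comm hn]

namespace RatFunc

variable {K : Type*} [Field K]

theorem intDegree_pow (x : RatFunc K) (m : ℕ) : (x ^ m).intDegree = m * x.intDegree := by
  rcases eq_or_ne x 0 with rfl | hx
  · cases m <;> simp [intDegree_one, intDegree_zero]
  induction m with
  | zero => simp [intDegree_one]
  | succ m ih =>
    rw [pow_succ, intDegree_mul (pow_ne_zero m hx) hx, ih]
    push_cast
    ring

theorem intDegree_neg_one_pow_mul (k : ℕ) (x : RatFunc K) :
    ((-1) ^ k * x).intDegree = x.intDegree := by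
  rcases neg_one_pow_eq_or (RatFunc K) k with h | h <;> simp [h, intDegree_neg]

theorem intDegree_X_pow_sub_X {m : ℕ} (hm : 1 < m) : (X ^ m - X : RatFunc K).intDegree = m := by
  have hpoly : (X ^ m - X : RatFunc K) = algebraMap (Polynomial K) _ (.X ^ m - .X) := by simp
  rw [hpoly, intDegree_polynomial, FiniteField.X_pow_card_sub_X_natDegree_eq K hm]

theorem X_pow_sub_X_ne_zero {m : ℕ} (hm : 1 < m) : (X ^ m - X : RatFunc K) ≠ 0 := fun h => by
  have := intDegree_X_pow_sub_X (K := K) hm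
  rw [h, intDegree_zero] at this
  omega

noncomputable def carlitzL (K : Type*) [Field K] (q k : ℕ) : RatFunc K :=
  ∏ j ∈ Finset.Icc 1 k, (X ^ q ^ j - X)

@[simp]
theorem carlitzL_zero (q : ℕ) : carlitzL K q 0 = 1 := rfl

theorem carlitzL_succ (q k : ℕ) :
    carlitzL K q (k + 1) = carlitzL K q k * (X ^ q ^ (k + 1) - X) :=
  Finset.prod_Icc_succ_top (Nat.le_add_left 1 k) _

theorem carlitzL_ne_zero {q : ℕ} (hq : 1 < q) (k : ℕ) : carlitzL K q k ≠ 0 :=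
  Finset.prod_ne_zero_iff.mpr fun j hj =>
    X_pow_sub_X_ne_zero (Nat.one_lt_pow (by grind) hq)

theorem sub_one_mul_intDegree_carlitzL {q : ℕ} (hq : 1 < q) (k : ℕ) :
    ((q : ℤ) - 1) * (carlitzL K q k).intDegree = q ^ (k + 1) - q := by
  induction k with
  | zero => simp [intDegree_one]
  | succ k ih =>
    have hqk : 1 < q ^ (k + 1) := Nat.one_lt_pow k.add_one_ne_zero hq
    rw [carlitzL_succ, intDegree_mul (carlitzL_ne_zero hq k) (X_pow_sub_X_ne_zero hqk),
      intDegree_X_pow_sub_X hqk, mul_add, ih]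
    push_cast
    ring

theorem eq_neg_one_pow_mul_div_carlitzL {q n : ℕ} (hq : 1 < q) (hn : n ∣ q - 1)
    (F : RatFunc K) {ℓ : ℕ → RatFunc K} (h0 : ℓ 0 = 1)
    (hrec : ∀ k, ℓ (k + 1) * (X ^ q ^ (k + 1) - X) = -ℓ k * F ^ ((q - 1) / n * q ^ k))
    (k : ℕ) : ℓ k = (-1) ^ k * F ^ ((q ^ k - 1) / n) / carlitzL K q k := by
  induction k with
  | zero => simp [h0]
  | succ k ih =>
    have hfactor := X_pow_sub_X_ne_zero (K := K) (Nat.one_lt_pow k.add_one_ne_zero hq)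
    rw [(eq_div_iff hfactor).mpr (hrec k), ih, carlitzL_succ, Nat.pow_succ_sub_one_div hn,
      pow_add]
    field_simp
    ring

theorem intDegree_neg_one_pow_mul_pow_div_carlitzL {q n : ℕ} (hq : 1 < q) (hn : n ∣ q - 1)
    (hn0 : n ≠ 0) {f : Polynomial K} (hf : f ≠ 0) (k : ℕ) :
    ((((-1) ^ k * algebraMap _ (RatFunc K) f ^ ((q ^ k - 1) / n) / carlitzL K q k).intDegree
      : ℤ) : ℝ) = ((q : ℝ) ^ k - 1) * (f.natDegree / n - q / (q - 1)) := by
  have hF : algebraMap _ (RatFunc K) f ≠ 0 := algebraMap_ne_zero hf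
  have hnum : (-1) ^ k * algebraMap _ (RatFunc K) f ^ ((q ^ k - 1) / n) ≠ 0 :=
    mul_ne_zero (pow_ne_zero _ (neg_ne_zero.mpr one_ne_zero)) (pow_ne_zero _ hF)
  have hq' : (1 : ℝ) < q := by exact_mod_cast hq
  have hL : ((carlitzL K q k).intDegree : ℝ) = q * (q ^ k - 1) / (q - 1) := by
    have h : ((q : ℝ) - 1) * (carlitzL K q k).intDegree = q ^ (k + 1) - q := by
      exact_mod_cast sub_one_mul_intDegree_carlitzL hq k
    rw [eq_div_iff (by linarith), mul_comm, h]
    ring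
  have hm : (((q ^ k - 1) / n : ℕ) : ℝ) = (q ^ k - 1) / n := by
    rw [Nat.cast_div (hn.trans (by simpa using Nat.sub_dvd_pow_sub_pow q 1 k))
      (by exact_mod_cast hn0), Nat.cast_sub (Nat.one_le_pow _ _ (by omega))]
    push_cast
    ring
  rw [intDegree_div hnum (carlitzL_ne_zero hq k), intDegree_neg_one_pow_mul, intDegree_pow,
    intDegree_polynomial, Int.cast_sub, Int.cast_mul, Int.cast_natCast, Int.cast_natCast, hm, hL]
  field_simp

end RatFunc

theorem tendsto_rpow_sub_one_mul_rpow_one_div_pow {q : ℝ} (hq : 1 < q) (c : ℝ) :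
    Tendsto (fun k : ℕ => (q ^ ((q ^ k - 1) * c)) ^ (1 / q ^ k)) atTop (𝓝 (q ^ c)) := by
  have hexp : Tendsto (fun k : ℕ => c - c * q⁻¹ ^ k) atTop (𝓝 c) := by
    simpa using tendsto_const_nhds.sub (tendsto_const_nhds.mul
      (tendsto_pow_atTop_nhds_zero_of_lt_one (by positivity) (inv_lt_one_of_one_lt₀ hq)))
  refine (tendsto_const_nhds.rpow hexp (Or.inl (by positivity))).congr fun k => ?_
  have hqk : q ^ k ≠ 0 := by positivity
  rw [← Real.rpow_mul (by positivity), inv_pow]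
  congr 1
  field_simp

open RatFunc in
theorem stmt_15_general (Fq : Type*) [Field Fq] [Fintype Fq]
    (n : ℕ) (hn : n ∣ Fintype.card Fq - 1)
    (f : Polynomial Fq) (hf0 : f ≠ 0)
    (d : ℕ) (hd : f.natDegree = d)
    (ℓ : ℕ → RatFunc Fq) (hℓ0 : ℓ 0 = 1)
    (hrec : ∀ k : ℕ,
      ℓ (k + 1) * (RatFunc.X ^ Fintype.card Fq ^ (k + 1) - RatFunc.X) =
        - ℓ k * algebraMap (Polynomial Fq) (RatFunc Fq) f ^
            ((Fintype.card Fq - 1) / n * Fintype.card Fq ^ k)) :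
    (∀ k : ℕ, ℓ k = (-1) ^ k *
        algebraMap (Polynomial Fq) (RatFunc Fq) f ^ ((Fintype.card Fq ^ k - 1) / n) /
        ∏ j ∈ Finset.Icc 1 k, (RatFunc.X ^ Fintype.card Fq ^ j - RatFunc.X)) ∧
    Filter.Tendsto
      (fun k : ℕ => ((Fintype.card Fq : ℝ) ^ (((ℓ k).intDegree : ℝ))) ^
        ((1 : ℝ) / (Fintype.card Fq : ℝ) ^ k))
      Filter.atTop
      (nhds (((Fintype.card Fq : ℝ) ^
        ((1 : ℝ) + 1 / ((Fintype.card Fq : ℝ) - 1) - (d : ℝ) / (n : ℝ)))⁻¹)) := by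
  set q := Fintype.card Fq
  have hq : 1 < q := Fintype.one_lt_card
  have hn0 : n ≠ 0 := (Nat.pos_of_dvd_of_pos hn (by omega)).ne'
  have hform := eq_neg_one_pow_mul_div_carlitzL hq hn _ hℓ0 hrec
  refine ⟨hform, ?_⟩
  have hq' : (1 : ℝ) < q := by exact_mod_cast hq
  have hlimit : ((q : ℝ) ^ ((1 : ℝ) + 1 / ((q : ℝ) - 1) - (d : ℝ) / (n : ℝ)))⁻¹ =
      (q : ℝ) ^ ((d : ℝ) / n - q / (q - 1)) := by
    rw [← Real.rpow_neg (by positivity)]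
    congr 1
    field_simp [show (q : ℝ) - 1 ≠ 0 by linarith]
    ring
  rw [hlimit]
  refine (tendsto_rpow_sub_one_mul_rpow_one_div_pow hq' _).congr fun k => ?_
  rw [hform k, intDegree_neg_one_pow_mul_pow_div_carlitzL hq hn hn0 hf0, hd]

/-- For `E_t = θ + f^{(q-1)/n} τ` with `n ∣ q-1` and `f` of degree `d`, the logarithm
coefficients (determined by `ℓ_0 = 1` and the recursion coming from
`log_E ∘ E_t = θ ∘ log_E`) are `ℓ_k = (-1)^k f^{(q^k-1)/n} / L_k` with
`L_k = ∏_{j=1}^k (θ^{q^j} - θ)`, and the radius of convergence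
`(lim_k |ℓ_k|_∞^{1/q^k})⁻¹` equals `q^{1 + 1/(q-1) - d/n}` (with `|x|_∞ = q^{deg x}`). -/
theorem stmt_15 (Fq : Type*) [Field Fq] [Fintype Fq]
    (n : ℕ) (hn : n ∣ Fintype.card Fq - 1) (hn0 : 0 < n)
    (f : Polynomial Fq) (hf0 : f ≠ 0)
    (hfree : ∀ g : Polynomial Fq, 0 < g.natDegree → ¬ g ^ n ∣ f)
    (d : ℕ) (hd : f.natDegree = d)
    (ℓ : ℕ → RatFunc Fq) (hℓ0 : ℓ 0 = 1)
    (hrec : ∀ k : ℕ,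
      ℓ (k + 1) * (RatFunc.X ^ Fintype.card Fq ^ (k + 1) - RatFunc.X) =
        - ℓ k * algebraMap (Polynomial Fq) (RatFunc Fq) f ^
            ((Fintype.card Fq - 1) / n * Fintype.card Fq ^ k)) :
    (∀ k : ℕ, ℓ k = (-1) ^ k *
        algebraMap (Polynomial Fq) (RatFunc Fq) f ^ ((Fintype.card Fq ^ k - 1) / n) /
        ∏ j ∈ Finset.Icc 1 k, (RatFunc.X ^ Fintype.card Fq ^ j - RatFunc.X)) ∧
    Filter.Tendsto
      (fun k : ℕ => ((Fintype.card Fq : ℝ) ^ (((ℓ k).intDegree : ℝ))) ^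
        ((1 : ℝ) / (Fintype.card Fq : ℝ) ^ k))
      Filter.atTop
      (nhds (((Fintype.card Fq : ℝ) ^
        ((1 : ℝ) + 1 / ((Fintype.card Fq : ℝ) - 1) - (d : ℝ) / (n : ℝ)))⁻¹)) :=
  stmt_15_general Fq n hn f hf0 d hd ℓ hℓ0 hrec
end
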